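/- arXiv:math/9209207 — 2 statements merged into one kernel-verified Lean document; each statement's English description precedes it below -/
import Mathlib

section
/- If κ is a regular cardinal with 2^{<κ} > κ, then for every cardinal θ ≥ κ the Baire number 𝔫_κ^θ of the space (2^θ)_κ equals κ⁺. -/
/-
Lower bound: the forcing of conditions of size `< κ` is `κ`-closed. Given dense open sets `D α`
indexed by a well-order whose initial segments have size `< κ`, choose by recursion a decreasing
chain of conditions `p α` with `cylinder (p α) ⊆ D α`; by regularity of `κ` the union of the
conditions below `α` is again a condition, so the recursion never stops, and any total function
extending the union of the whole chain lies in every `D α`.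

Upper bound: take `μ < κ` with `κ < 2 ^ μ` and embed `κ × μ` into `θ`, splitting part of `θ` into
`κ` blocks of size `μ`. For each pattern `z : μ → 2` the functions showing `z` on some block form a
dense open set, but a single function shows at most `κ` patterns, so `κ⁺` patterns give `κ⁺` dense
open sets with empty intersection.
-/

open Cardinal Set

universe u

/-- `ExtFn q p` : the partial function `q` extends `p`. -/
def ExtFn {θ : Type u} (q p : θ → Option Bool) : Prop :=
  ∀ x b, p x = some b → q x = some b

/-- `Fn κ θ` : partial functions `θ → 2` of size `< κ`. -/
def Fn (κ : Cardinal.{u}) (θ : Type u) : Set (θ → Option Bool) :=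
  {p | #{x | p x ≠ none} < κ}

/-- The basic open set determined by a condition `p`. -/
def cylinder {θ : Type u} (p : θ → Option Bool) : Set (θ → Bool) :=
  {f | ∀ x b, p x = some b → f x = b}

/-- The topology of the space `(2^θ)_κ`. -/
def kTop (κ : Cardinal.{u}) (θ : Type u) : TopologicalSpace (θ → Bool) :=
  TopologicalSpace.generateFrom {U | ∃ p ∈ Fn κ θ, U = cylinder p}

/-- The Baire number of the space `(2^θ)_κ` : the least cardinality of a family of
dense open sets with empty intersection. -/
noncomputable def spaceBaire (κ : Cardinal.{u}) (θ : Type u) : Cardinal.{u} :=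
  sInf {c | ∃ F : Set (Set (θ → Bool)), #F = c ∧
    (∀ U ∈ F, @IsOpen _ (kTop κ θ) U ∧ @Dense _ (kTop κ θ) U) ∧ ⋂₀ F = ∅}

/-- `𝔫_κ^θ` for cardinals `κ ≤ θ`. -/
noncomputable def nBaire (κ θ : Cardinal.{u}) : Cardinal.{u} :=
  spaceBaire κ θ.out

open TopologicalSpace

section Conditions

variable {T : Type u} {κ : Cardinal.{u}} {f : T → Bool} {p q r : T → Option Bool}

def Compatible (p q : T → Option Bool) : Prop :=
  ∀ x b b', p x = some b → q x = some b' → b = b'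

theorem Compatible.symm (h : Compatible p q) : Compatible q p :=
  fun x b b' hb hb' => (h x b' b hb' hb).symm

theorem ExtFn.refl (p : T → Option Bool) : ExtFn p p :=
  fun _ _ h => h

theorem ExtFn.trans (hrq : ExtFn r q) (hqp : ExtFn q p) : ExtFn r p :=
  fun x b hb => hrq x b (hqp x b hb)

theorem ExtFn.compatible (h : ExtFn q p) : Compatible p q :=
  fun x b _ hb hb' => Option.some_inj.1 ((h x b hb).symm.trans hb')

theorem compatible_of_mem_cylinder (hp : f ∈ cylinder p) (hq : f ∈ cylinder q) :
    Compatible p q :=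
  fun x b b' hb hb' => (hp x b hb).symm.trans (hq x b' hb')

theorem compatible_of_forall_lt_extFn {ι : Type*} [LinearOrder ι] {p : ι → T → Option Bool}
    (h : ∀ i j, i < j → ExtFn (p j) (p i)) (i j : ι) : Compatible (p i) (p j) := by
  rcases lt_trichotomy i j with hij | rfl | hji
  · exact (h i j hij).compatible
  · exact (ExtFn.refl _).compatible
  · exact (h j i hji).compatible.symm

theorem cylinder_anti (h : ExtFn q p) : cylinder q ⊆ cylinder p :=
  fun _ hf x b hb => hf x b (h x b hb)

theorem getD_mem_cylinder (p : T → Option Bool) : (fun x => (p x).getD false) ∈ cylinder p :=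
  fun x b hb => by simp [hb]

/-- Flipping `f` at a point outside the domain of `q` stays inside `cylinder q`. -/
theorem extFn_of_cylinder_subset (hf : f ∈ cylinder q) (h : cylinder q ⊆ cylinder p) :
    ExtFn q p := by
  classical
  intro x b hb
  cases hqx : q x with
  | none =>
    have hflip : Function.update f x (!b) ∈ cylinder q := by
      intro y c hc
      have hyx : y ≠ x := by rintro rfl; simp [hqx] at hc
      rw [Function.update_of_ne hyx]
      exact hf y c hc
    simpa using h hflip x b hb
  | some c => rw [← hf x c hqx, (h hf) x b hb]

theorem mem_Fn_of_subset {s : Set T} (hs : #s < κ) (h : ∀ x, p x ≠ none → x ∈ s) :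
    p ∈ Fn κ T :=
  (mk_le_mk_of_subset h).trans_lt hs

def merge (p q : T → Option Bool) : T → Option Bool :=
  fun x => (p x).or (q x)

theorem extFn_merge_left : ExtFn (merge p q) p :=
  fun x b hb => by simp [merge, hb]

theorem extFn_merge_right (h : Compatible p q) : ExtFn (merge p q) q := by
  intro x b hb
  cases hpx : p x with
  | none => simp [merge, hpx, hb]
  | some c => simp [merge, hpx, h x c b hpx hb]

theorem mem_cylinder_merge (hp : f ∈ cylinder p) (hq : f ∈ cylinder q) :
    f ∈ cylinder (merge p q) := by
  intro x b hb
  cases hpx : p x with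
  | none => simp only [merge, hpx, Option.none_or] at hb; exact hq x b hb
  | some c => simp only [merge, hpx, Option.some_or, Option.some_inj] at hb; exact hb ▸ hp x c hpx

theorem merge_mem_Fn (hκ : ℵ₀ ≤ κ) (hp : p ∈ Fn κ T) (hq : q ∈ Fn κ T) : merge p q ∈ Fn κ T := by
  refine mem_Fn_of_subset ((mk_union_le _ _).trans_lt (add_lt_of_lt hκ hp hq)) fun x hx => ?_
  by_cases hpx : p x = none
  · exact Or.inr (by simpa [merge, hpx] using hx)
  · exact Or.inl hpx

open Classical in
noncomputable def iMerge {ι : Type*} (p : ι → T → Option Bool) : T → Option Bool :=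
  fun x => if h : ∃ i, p i x ≠ none then p h.choose x else none

theorem extFn_iMerge {ι : Type*} {p : ι → T → Option Bool} (h : ∀ i j, Compatible (p i) (p j))
    (i : ι) : ExtFn (iMerge p) (p i) := by
  intro x b hb
  have hx : ∃ j, p j x ≠ none := ⟨i, by simp [hb]⟩
  obtain ⟨c, hc⟩ := Option.ne_none_iff_exists'.1 hx.choose_spec
  simp only [iMerge, dif_pos hx, hc, h _ i x c b hc hb]

theorem iMerge_mem_Fn {ι : Type u} {p : ι → T → Option Bool} (hκ : κ.IsRegular) (hι : #ι < κ)
    (hp : ∀ i, p i ∈ Fn κ T) : iMerge p ∈ Fn κ T := by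
  refine mem_Fn_of_subset (s := ⋃ i, {x | p i x ≠ none})
    ((card_iUnion_lt_iff_forall_of_isRegular hκ hι).2 hp) fun x hx => ?_
  by_cases h : ∃ i, p i x ≠ none
  · exact mem_iUnion.2 h
  · simp [iMerge, dif_neg h] at hx

end Conditions

section Topology

variable {T : Type u} {κ : Cardinal.{u}} {p : T → Option Bool} {D : Set (T → Bool)}

theorem isOpen_cylinder (hp : p ∈ Fn κ T) : @IsOpen _ (kTop κ T) (cylinder p) :=
  GenerateOpen.basic _ ⟨p, hp, rfl⟩

theorem isTopologicalBasis_cylinder (hκ : ℵ₀ ≤ κ) :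
    @IsTopologicalBasis _ (kTop κ T) {U | ∃ p ∈ Fn κ T, U = cylinder p} := by
  let := kTop κ T
  refine ⟨?_, ?_, rfl⟩
  · rintro _ ⟨p, hp, rfl⟩ _ ⟨q, hq, rfl⟩ f ⟨hfp, hfq⟩
    have hpq := compatible_of_mem_cylinder hfp hfq
    exact ⟨cylinder (merge p q), ⟨_, merge_mem_Fn hκ hp hq, rfl⟩, mem_cylinder_merge hfp hfq,
      subset_inter (cylinder_anti extFn_merge_left) (cylinder_anti (extFn_merge_right hpq))⟩
  · refine eq_univ_of_forall fun f =>
      ⟨cylinder fun _ => none, ⟨_, ?_, rfl⟩, fun _ _ h => by cases h⟩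
    exact mem_Fn_of_subset (s := ∅) (by simpa using aleph0_pos.trans_le hκ) fun _ h => absurd rfl h

theorem exists_extFn_cylinder_subset (hκ : ℵ₀ ≤ κ) (hDo : @IsOpen _ (kTop κ T) D)
    (hDd : @Dense _ (kTop κ T) D) (hp : p ∈ Fn κ T) :
    ∃ q ∈ Fn κ T, ExtFn q p ∧ cylinder q ⊆ D := by
  let := kTop κ T
  have hb := isTopologicalBasis_cylinder (T := T) hκ
  obtain ⟨f, hf⟩ := hDd.inter_open_nonempty _ (isOpen_cylinder hp) ⟨_, getD_mem_cylinder p⟩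
  obtain ⟨_, ⟨q, hq, rfl⟩, hfq, hqD⟩ :=
    hb.isOpen_iff.1 ((isOpen_cylinder hp).inter hDo) f hf
  exact ⟨q, hq, extFn_of_cylinder_subset hfq (hqD.trans inter_subset_left),
    hqD.trans inter_subset_right⟩

theorem dense_of_forall_exists_extFn (hκ : ℵ₀ ≤ κ)
    (h : ∀ p ∈ Fn κ T, ∃ q, ExtFn q p ∧ cylinder q ⊆ D) : @Dense _ (kTop κ T) D := by
  let := kTop κ T
  refine (isTopologicalBasis_cylinder hκ).dense_iff.2 ?_
  rintro _ ⟨p, hp, rfl⟩ -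
  obtain ⟨q, hqp, hqD⟩ := h p hp
  exact ⟨_, cylinder_anti hqp (getD_mem_cylinder q), hqD (getD_mem_cylinder q)⟩

end Topology

section Closure

variable {T : Type u} {ι : Type u} [LinearOrder ι] [WellFoundedLT ι]

open Classical in
noncomputable def chainMeeting (κ : Cardinal.{u}) (D : ι → Set (T → Bool)) :
    ι → T → Option Bool :=
  WellFoundedLT.fix fun α prev =>
    if h : ∃ q ∈ Fn κ T, ExtFn q (iMerge fun β : Iio α => prev β β.2) ∧ cylinder q ⊆ D α
    then h.choose else fun _ => none

variable {κ : Cardinal.{u}} {D : ι → Set (T → Bool)}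

theorem chainMeeting_spec (hκ : κ.IsRegular) (hι : ∀ α : ι, #(Iio α) < κ)
    (hD : ∀ α, @IsOpen _ (kTop κ T) (D α) ∧ @Dense _ (kTop κ T) (D α)) (α : ι) :
    chainMeeting κ D α ∈ Fn κ T ∧
      (∀ β < α, ExtFn (chainMeeting κ D α) (chainMeeting κ D β)) ∧
      cylinder (chainMeeting κ D α) ⊆ D α := by
  induction α using WellFoundedLT.induction with
  | ind α ih =>
  have hcompat : ∀ β γ : Iio α, Compatible (chainMeeting κ D β) (chainMeeting κ D γ) :=
    compatible_of_forall_lt_extFn fun β γ hβγ => (ih γ γ.2).2.1 β hβγ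
  have hex := exists_extFn_cylinder_subset hκ.aleph0_le (hD α).1 (hD α).2
    (iMerge_mem_Fn hκ (hι α) fun β : Iio α => (ih β β.2).1)
  have hα : chainMeeting κ D α = hex.choose := by
    unfold chainMeeting
    rw [WellFoundedLT.fix_eq]
    exact dif_pos hex
  obtain ⟨hq, hext, hsub⟩ := hex.choose_spec
  rw [hα]
  exact ⟨hq, fun β hβ => hext.trans (extFn_iMerge hcompat ⟨β, hβ⟩), hsub⟩

theorem iInter_nonempty_of_forall_mk_Iio_lt (hκ : κ.IsRegular) (hι : ∀ α : ι, #(Iio α) < κ)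
    (hD : ∀ α, @IsOpen _ (kTop κ T) (D α) ∧ @Dense _ (kTop κ T) (D α)) :
    (⋂ α, D α).Nonempty := by
  have hcompat := compatible_of_forall_lt_extFn fun β γ hβγ =>
    (chainMeeting_spec hκ hι hD γ).2.1 β hβγ
  exact ⟨_, mem_iInter.2 fun α => (chainMeeting_spec hκ hι hD α).2.2 <|
    cylinder_anti (extFn_iMerge hcompat α) (getD_mem_cylinder _)⟩

end Closure

theorem sInter_nonempty_of_mk_le {T : Type u} {κ : Cardinal.{u}} (hκ : κ.IsRegular)
    {F : Set (Set (T → Bool))} (hF : ∀ U ∈ F, @IsOpen _ (kTop κ T) U ∧ @Dense _ (kTop κ T) U)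
    (hFκ : #F ≤ κ) : (⋂₀ F).Nonempty := by
  let := kTop κ T
  obtain ⟨e⟩ : Nonempty (F ↪ κ.ord.ToType) := by rwa [← le_def, mk_ord_toType]
  let D : κ.ord.ToType → Set (T → Bool) := Function.extend e Subtype.val fun _ => univ
  have hD : ∀ α, IsOpen (D α) ∧ Dense (D α) := by
    intro α
    by_cases h : ∃ U, e U = α
    · obtain ⟨U, rfl⟩ := h
      simpa only [D, e.injective.extend_apply] using hF U U.2
    · simpa only [D, Function.extend_apply' _ _ _ h] using ⟨isOpen_univ, dense_univ⟩
  obtain ⟨f, hf⟩ :=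
    iInter_nonempty_of_forall_mk_Iio_lt hκ (fun α => by simpa using mk_Iio_lt α) hD
  refine ⟨f, fun U hU => ?_⟩
  simpa only [D, e.injective.extend_apply] using mem_iInter.1 hf (e ⟨U, hU⟩)

section Blocks

variable {T K M : Type u} {κ : Cardinal.{u}} (B : K × M ↪ T)

noncomputable def blockCond (k : K) (z : M → Bool) : T → Option Bool :=
  Function.extend (fun m => B (k, m)) (fun m => some (z m)) fun _ => none

def patternSet (z : M → Bool) : Set (T → Bool) :=
  ⋃ k, cylinder (blockCond B k z)

theorem blockCond_apply (k : K) (z : M → Bool) (m : M) :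
    blockCond B k z (B (k, m)) = some (z m) :=
  (B.injective.comp (Prod.mk_right_injective k)).extend_apply _ _ m

theorem exists_eq_of_blockCond_ne_none {k : K} {z : M → Bool} {x : T}
    (h : blockCond B k z x ≠ none) : ∃ m, B (k, m) = x := by
  by_contra hx
  exact h (Function.extend_apply' _ _ _ hx)

theorem mem_cylinder_blockCond {f : T → Bool} {k : K} {z : M → Bool} :
    f ∈ cylinder (blockCond B k z) ↔ ∀ m, f (B (k, m)) = z m := by
  refine ⟨fun hf m => hf _ _ (blockCond_apply B k z m), fun hf x b hb => ?_⟩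
  obtain ⟨m, rfl⟩ := exists_eq_of_blockCond_ne_none B (ne_of_eq_of_ne hb (Option.some_ne_none b))
  rw [blockCond_apply, Option.some_inj] at hb
  rw [hf m, hb]

theorem blockCond_mem_Fn (hM : #M < κ) (k : K) (z : M → Bool) : blockCond B k z ∈ Fn κ T :=
  mem_Fn_of_subset (mk_range_le.trans_lt hM) fun _ hx => exists_eq_of_blockCond_ne_none B hx

theorem exists_block_eq_none (hK : κ ≤ #K) {p : T → Option Bool} (hp : p ∈ Fn κ T) :
    ∃ k, ∀ m, p (B (k, m)) = none := by
  by_contra! h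
  choose m hm using h
  refine hp.not_ge (hK.trans (mk_le_of_injective (f := fun k => ⟨B (k, m k), hm k⟩) ?_))
  intro k k' hkk'
  exact congrArg Prod.fst (B.injective (congrArg Subtype.val hkk'))

theorem isOpen_patternSet (hM : #M < κ) (z : M → Bool) : @IsOpen _ (kTop κ T) (patternSet B z) :=
  @isOpen_iUnion _ _ (kTop κ T) _ fun k => isOpen_cylinder (blockCond_mem_Fn B hM k z)

theorem dense_patternSet (hκ : ℵ₀ ≤ κ) (hK : κ ≤ #K) (z : M → Bool) :
    @Dense _ (kTop κ T) (patternSet B z) := by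
  refine dense_of_forall_exists_extFn hκ fun p hp => ?_
  obtain ⟨k, hk⟩ := exists_block_eq_none B hK hp
  have hcompat : Compatible (blockCond B k z) p := by
    intro x b b' hb hb'
    obtain ⟨m, rfl⟩ :=
      exists_eq_of_blockCond_ne_none B (ne_of_eq_of_ne hb (Option.some_ne_none b))
    simp [hk m] at hb'
  exact ⟨merge (blockCond B k z) p, extFn_merge_right hcompat,
    (cylinder_anti extFn_merge_left).trans (subset_iUnion (fun k => cylinder (blockCond B k z)) k)⟩

theorem sInter_image_patternSet_eq_empty {S : Set (M → Bool)} (hS : #K < #S) :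
    ⋂₀ (patternSet B '' S) = ∅ := by
  refine eq_empty_of_forall_notMem fun f hf => hS.not_ge ?_
  have hshows : ∀ z : S, ∃ k, ∀ m, f (B (k, m)) = z.1 m := fun z => by
    obtain ⟨k, hk⟩ := mem_iUnion.1 (hf _ (mem_image_of_mem _ z.2))
    exact ⟨k, (mem_cylinder_blockCond B).1 hk⟩
  choose k hk using hshows
  refine mk_le_of_injective (f := k) fun z z' h => Subtype.ext (funext fun m => ?_)
  rw [← hk z m, ← hk z' m, h]

end Blocks

theorem exists_dense_open_sInter_eq_empty {T : Type u} {κ μ : Cardinal.{u}} (hκ : ℵ₀ ≤ κ)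
    (hμ : μ < κ) (hκμ : κ < 2 ^ μ) (hT : κ ≤ #T) :
    ∃ F : Set (Set (T → Bool)), #F ≤ Order.succ κ ∧
      (∀ U ∈ F, @IsOpen _ (kTop κ T) U ∧ @Dense _ (kTop κ T) U) ∧ ⋂₀ F = ∅ := by
  obtain ⟨B⟩ : Nonempty (κ.out × μ.out ↪ T) := by
    rw [← le_def, mk_prod, lift_id, lift_id, mk_out, mk_out]
    exact (mul_le_mul_right hμ.le κ).trans ((mul_eq_self hκ).le.trans hT)
  obtain ⟨S, hS⟩ : ∃ S : Set (μ.out → Bool), #S = Order.succ κ := by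
    refine le_mk_iff_exists_set.1 ?_
    simpa [mk_out] using Order.succ_le_of_lt hκμ
  refine ⟨patternSet B '' S, mk_image_le.trans hS.le, ?_,
    sInter_image_patternSet_eq_empty B (by rw [hS, mk_out]; exact Order.lt_succ κ)⟩
  rintro _ ⟨z, -, rfl⟩
  exact ⟨isOpen_patternSet B (by rwa [mk_out]) z, dense_patternSet B hκ (mk_out κ).ge z⟩

/-- Fact 2: if `2^{<κ} > κ`, then `𝔫_κ^θ = κ⁺` for every `θ ≥ κ`. -/
theorem baire_eq_succ_of_powerlt (κ : Cardinal.{u}) (hκ : κ.IsRegular)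
    (h : κ < (2 : Cardinal.{u}) ^< κ) :
    ∀ θ : Cardinal.{u}, κ ≤ θ → nBaire κ θ = Order.succ κ := by
  intro θ hθ
  obtain ⟨μ, hμ, hκμ⟩ : ∃ μ < κ, κ < 2 ^ μ := by
    by_contra! hle
    exact h.not_ge (powerlt_le.2 hle)
  obtain ⟨F, hFκ, hF, hFe⟩ :=
    exists_dense_open_sInter_eq_empty hκ.aleph0_le hμ hκμ (T := θ.out) (by rwa [mk_out])
  unfold nBaire spaceBaire
  refine le_antisymm ((csInf_le' (by exact ⟨F, rfl, hF, hFe⟩)).trans hFκ)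
    (le_csInf (by exact ⟨_, F, rfl, hF, hFe⟩) ?_)
  rintro _ ⟨G, rfl, hG, hGe⟩
  refine Order.succ_le_of_lt (lt_of_not_ge fun hGκ => ?_)
  simpa [hGe] using sInter_nonempty_of_mk_le hκ hG hGκ
end

section
/- The Erdős–Rado partition relation (2^κ)⁺ → (κ⁺)²_κ holds for every infinite cardinal κ: for every coloring of the 2-element subsets of a set of size (2^κ)⁺ with κ colors, there is a monochromatic subset of size κ⁺. -/
open Cardinal Set

universe u

/-!
Let `θ = 2 ^ κ`, so that `θ ^ κ = θ`. Along a well-order `T` of type `κ⁺` choose sets `C t` of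
size `≤ θ` such that `C t` realizes every satisfiable colour type over at most `κ` parameters from
the earlier stages: there are only `θ ^ κ = θ` such types. Since `#α > θ`, some `a` lies outside
every `C t`, and picking `x t ∈ C t` realizing the type of `a` over `{x s | s < t}` yields an
end-homogeneous sequence, `c {x s, x t} = c {x s, a}` for `s < t`. As `κ⁺` is regular, the
pigeonhole principle gives `κ⁺` indices `s` with the same colour `c {x s, a}`, and their image is
monochromatic.
-/

theorem WellFoundedLT.exists_forall_rec {T β : Type*} [LinearOrder T] [WellFoundedLT T]
    (R : (t : T) → (Iio t → β) → β → Prop) (h : ∀ t g, ∃ b, R t g b) :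
    ∃ f : T → β, ∀ t, R t (fun s => f s) (f t) := by
  choose F hF using h
  refine ⟨wellFounded_lt.fix fun t ih => F t fun s => ih s.1 s.2, fun t => ?_⟩
  rw [wellFounded_lt.fix_eq]
  exact hF _ _

theorem Cardinal.mk_iUnion_le_of_le {α ι : Type u} {f : ι → Set α} {θ : Cardinal.{u}}
    (hθ : ℵ₀ ≤ θ) (hι : #ι ≤ θ) (hf : ∀ i, #(f i) ≤ θ) : #(⋃ i, f i) ≤ θ :=
  calc #(⋃ i, f i) ≤ #ι * ⨆ i, #(f i) := mk_iUnion_le f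
    _ ≤ θ * θ := mul_le_mul' hι (ciSup_le' hf)
    _ = θ := mul_eq_self hθ

namespace ErdosRado

variable {α ν : Type u}

/-- `G` is read as a partial colour type over the parameters `z` of its pairs `(z, k)`. -/
def Realizes (c : Sym2 α → ν) (G : Set (α × ν)) (x : α) : Prop :=
  ∀ p ∈ G, p.1 ≠ x ∧ c s(p.1, x) = p.2

theorem exists_small_realizing_set {θ κ : Cardinal.{u}} (hθ : ℵ₀ ≤ θ) (hθκ : θ ^ κ = θ)
    (hν : #ν ≤ θ) (c : Sym2 α → ν) {U : Set α} (hU : #U ≤ θ) :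
    ∃ V : Set α, #V ≤ θ ∧ ∀ G ⊆ U ×ˢ (Set.univ : Set ν), #G ≤ κ →
      (∃ y, Realizes c G y) → ∃ x ∈ V, Realizes c G x := by
  let Req := {G : Set (α × ν) // (G ⊆ U ×ˢ Set.univ ∧ #G ≤ κ) ∧ ∃ y, Realizes c G y}
  refine ⟨range fun G : Req => G.2.2.choose, ?_, fun G hGU hG hreal =>
    ⟨_, mem_range_self ⟨G, ⟨hGU, hG⟩, hreal⟩, hreal.choose_spec⟩⟩
  have hUν : #(U ×ˢ (Set.univ : Set ν)) ≤ θ := by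
    rw [mk_setProd, mk_univ]
    exact (mul_le_mul' hU hν).trans (mul_eq_self hθ).le
  calc #(range fun G : Req => G.2.2.choose) ≤ #Req := mk_range_le
    _ ≤ #{G : Set (α × ν) // G ⊆ U ×ˢ Set.univ ∧ #G ≤ κ} := mk_subtype_mono fun _ h => h.1
    _ ≤ max #(U ×ˢ (Set.univ : Set ν)) ℵ₀ ^ κ := mk_bounded_subset_le _ _
    _ ≤ θ ^ κ := power_le_power_right (max_le hUν hθ)
    _ = θ := hθκ

variable {T : Type u} [LinearOrder T]

theorem exists_realizing_chain [WellFoundedLT T] {θ κ : Cardinal.{u}} (hθ : ℵ₀ ≤ θ)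
    (hθκ : θ ^ κ = θ) (hν : #ν ≤ θ) (hT : ∀ t : T, #(Iio t) ≤ θ) (c : Sym2 α → ν) :
    ∃ C : T → Set α, (∀ t, #(C t) ≤ θ) ∧ ∀ t, ∀ G ⊆ (⋃ s < t, C s) ×ˢ (Set.univ : Set ν),
      #G ≤ κ → (∃ y, Realizes c G y) → ∃ x ∈ C t, Realizes c G x := by
  obtain ⟨C, hC⟩ := WellFoundedLT.exists_forall_rec
    (fun (t : T) (g : Iio t → Set α) V => (∀ s, #(g s) ≤ θ) → #V ≤ θ ∧
      ∀ G ⊆ (⋃ s, g s) ×ˢ (Set.univ : Set ν), #G ≤ κ → (∃ y, Realizes c G y) →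
        ∃ x ∈ V, Realizes c G x)
    fun t g => by
      by_cases hg : ∀ s, #(g s) ≤ θ
      · obtain ⟨V, hV⟩ :=
          exists_small_realizing_set hθ hθκ hν c (mk_iUnion_le_of_le hθ (hT t) hg)
        exact ⟨V, fun _ => hV⟩
      · exact ⟨∅, fun h => absurd h hg⟩
  have hCθ : ∀ t, #(C t) ≤ θ := fun t =>
    WellFoundedLT.induction t fun t ih => (hC t fun s => ih s s.2).1
  refine ⟨C, hCθ, fun t => ?_⟩
  simpa only [iUnion_subtype, mem_Iio] using (hC t fun s => hCθ s).2

theorem exists_endHomogeneous_seq [WellFoundedLT T] {κ : Cardinal.{u}} (hκ : ℵ₀ ≤ κ)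
    (hν : #ν ≤ 2 ^ κ) (hIio : ∀ t : T, #(Iio t) ≤ κ) (hT : #T ≤ 2 ^ κ) (hα : 2 ^ κ < #α)
    (c : Sym2 α → ν) :
    ∃ (x : T → α) (a : α), ∀ s t, s < t → x s ≠ x t ∧ c s(x s, x t) = c s(x s, a) := by
  have hθ : ℵ₀ ≤ 2 ^ κ := hκ.trans (cantor κ).le
  have hθκ : ((2 : Cardinal) ^ κ) ^ κ = 2 ^ κ := by rw [← power_mul, mul_eq_self hκ]
  obtain ⟨C, hCθ, hC⟩ :=
    exists_realizing_chain hθ hθκ hν (fun t => (hIio t).trans (cantor κ).le) c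
  obtain ⟨a, ha⟩ : ∃ a, a ∉ ⋃ t, C t := by
    by_contra! h
    refine (mk_iUnion_le_of_le hθ hT hCθ).not_gt ?_
    rwa [eq_univ_of_forall h, mk_univ]
  obtain ⟨x, hx⟩ := WellFoundedLT.exists_forall_rec
    (fun (t : T) (g : Iio t → α) y => (∀ s : Iio t, g s ∈ C s) →
      y ∈ C t ∧ Realizes c (range fun s => (g s, c s(g s, a))) y)
    fun t g => by
      by_cases hg : ∀ s : Iio t, g s ∈ C s
      · have hG : range (fun s => (g s, c s(g s, a))) ⊆ (⋃ s < t, C s) ×ˢ Set.univ := by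
          rintro _ ⟨s, rfl⟩
          exact ⟨mem_biUnion s.2 (hg s), trivial⟩
        have ha_real : Realizes c (range fun s => (g s, c s(g s, a))) a := by
          rintro _ ⟨s, rfl⟩
          exact ⟨fun h => ha (h ▸ mem_iUnion_of_mem s (hg s)), rfl⟩
        obtain ⟨y, hyC, hy⟩ := hC t _ hG (mk_range_le.trans (hIio t)) ⟨a, ha_real⟩
        exact ⟨y, fun _ => ⟨hyC, hy⟩⟩
      · exact ⟨a, fun h => absurd h hg⟩
  have hxC : ∀ t, x t ∈ C t := fun t =>
    WellFoundedLT.induction t fun t ih => (hx t fun s => ih s s.2).1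
  exact ⟨x, a, fun s t hst => (hx t fun s => hxC s).2 _ ⟨⟨s, hst⟩, rfl⟩⟩

variable {c : Sym2 α → ν} {x : T → α} {d : T → ν}

theorem injective_of_endHomogeneous (hx : ∀ s t, s < t → x s ≠ x t ∧ c s(x s, x t) = d s) :
    Function.Injective x := fun s t hst => by
  by_contra hne
  rcases lt_or_gt_of_ne hne with h | h
  exacts [(hx s t h).1 hst, (hx t s h).1 hst.symm]

theorem monochromatic_image_of_endHomogeneous
    (hx : ∀ s t, s < t → x s ≠ x t ∧ c s(x s, x t) = d s) (k : ν) :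
    ∀ u ∈ x '' (d ⁻¹' {k}), ∀ v ∈ x '' (d ⁻¹' {k}), u ≠ v → c s(u, v) = k := by
  rintro _ ⟨s, hs, rfl⟩ _ ⟨t, ht, rfl⟩ hne
  rcases lt_or_gt_of_ne (ne_of_apply_ne x hne) with hst | hts
  · exact (hx s t hst).2.trans hs
  · exact ((congrArg c Sym2.eq_swap).trans (hx t s hts).2).trans ht

end ErdosRado

open ErdosRado

/-- The Erdős–Rado theorem `(2^κ)⁺ → (κ⁺)²_κ`: every coloring of the 2-element subsets of
a set of size `(2^κ)⁺` with at most `κ` colors admits a monochromatic set of size `κ⁺`. -/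
theorem erdos_rado (κ : Cardinal.{u}) (hκ : ℵ₀ ≤ κ)
    (α ν : Type u) (hα : #α = Order.succ ((2 : Cardinal.{u}) ^ κ)) (hν : #ν ≤ κ)
    (c : Sym2 α → ν) :
    ∃ H : Set α, Order.succ κ ≤ #H ∧
      ∃ k : ν, ∀ x ∈ H, ∀ y ∈ H, x ≠ y → c s(x, y) = k := by
  have hT : #(Order.succ κ).ord.ToType = Order.succ κ := by rw [mk_toType, card_ord]
  obtain ⟨x, a, hx⟩ := exists_endHomogeneous_seq hκ (hν.trans (cantor κ).le)
    (fun t => Order.lt_succ_iff.mp (by simpa using mk_Iio_lt t))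
    (hT.trans_le (Order.succ_le_of_lt (cantor κ))) (hα ▸ Order.lt_succ _) c
  obtain ⟨k, hk⟩ := infinite_pigeonhole_card (fun t => c s(x t, a)) (Order.succ κ) hT.ge
    (hκ.trans (Order.le_succ κ))
    (by rw [(isRegular_succ hκ).cof_ord]; exact Order.lt_succ_iff.mpr hν)
  refine ⟨x '' _, ?_, k, monochromatic_image_of_endHomogeneous hx k⟩
  rwa [mk_image_eq (injective_of_endHomogeneous hx)]
end
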